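/- arXiv:2512.10472 — 2 statements merged into one kernel-verified Lean document; each statement's English description precedes it below -/
import Mathlib

section
/- Let L be a finite label set and oc ⊆ L × L, and let G_oc be the well-formed-string grammar over (L, oc). Assume that no label of L is both an opener and a closer. Then no nonempty word generated by G_oc begins with a closer, and no nonempty word generated by G_oc ends with an opener. -/
/-!
Every sentential form derivable in `G_oc` is either a terminal word or `x S y` with `x`, `y`
terminal, and the word `x y` (resp. the terminal word) never starts with a closer nor ends with
an opener. A production `S → a S b` replaces `x y` by `x a b y`, and `a b` is `α`, with `α`
neutral, or `ψ ψ'`, which starts with an opener and ends with a closer; since no label is both,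
the ends of `x a b y` are again admissible.
-/

/-- The well-formed-string grammar `G_oc` over a finite label set `L` with opening/closing
relation `oc ⊆ L × L` (Definition 5.1): single nonterminal `S`, productions `S → ε`,
`S → αS` for every neutral label `α` (occurring neither as an opener nor as a closer in `oc`),
and `S → ψSψ'` for every `(ψ, ψ') ∈ oc`. -/
noncomputable def wfGrammar (L : Type) [Fintype L] [DecidableEq L] (oc : Finset (L × L)) :
    ContextFreeGrammar L where
  NT := Unit
  initial := ()
  rules := by
    classical
    exact
      {(⟨(), []⟩ : ContextFreeRule L Unit)} ∪
      ((Finset.univ.filter fun α : L => (∀ β, (α, β) ∉ oc) ∧ (∀ β, (β, α) ∉ oc)).image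
        fun α => (⟨(), [Symbol.terminal α, Symbol.nonterminal ()]⟩ : ContextFreeRule L Unit)) ∪
      (oc.image fun p =>
        (⟨(), [Symbol.terminal p.1, Symbol.nonterminal (), Symbol.terminal p.2]⟩ :
          ContextFreeRule L Unit))

section EndsSatisfy

variable {α : Type*} (p q : α → Prop)

def EndsSatisfy (w : List α) : Prop :=
  (∀ a ∈ w.head?, p a) ∧ (∀ a ∈ w.getLast?, q a)

variable {p q}

lemma EndsSatisfy.append_middle {x m y : List α} (hxy : EndsSatisfy p q (x ++ y))
    (hm : EndsSatisfy p q m) : EndsSatisfy p q (x ++ m ++ y) := by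
  obtain ⟨hxy₁, hxy₂⟩ := hxy
  obtain ⟨hm₁, hm₂⟩ := hm
  constructor
  · cases hx : x.head? <;> cases hm : m.head? <;> simp_all [List.head?_append]
  · cases hy : y.getLast? <;> cases hm : m.getLast? <;> simp_all [List.getLast?_append]

end EndsSatisfy

lemma map_terminal_append_cons_inj {T N : Type*} {x y : List T} {n n' : N}
    {p q : List (Symbol T N)}
    (h : x.map Symbol.terminal ++ Symbol.nonterminal n :: y.map Symbol.terminal
      = p ++ Symbol.nonterminal n' :: q) :
    p = x.map Symbol.terminal ∧ q = y.map Symbol.terminal := by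
  obtain ⟨hp, -, hq⟩ := (List.append_cons_inj_of_notMem (by simp) (by simp)).mp h
  exact ⟨hp.symm, hq.symm⟩

section WellFormed

variable {L : Type} [DecidableEq L] {oc : Finset (L × L)}

abbrev WfEnds (oc : Finset (L × L)) : List L → Prop :=
  EndsSatisfy (· ∉ oc.image Prod.snd) (· ∉ oc.image Prod.fst)

lemma wfEnds_pair (hdisj : ∀ a : L, a ∈ oc.image Prod.fst → a ∉ oc.image Prod.snd)
    {ψ ψ' : L} (h : (ψ, ψ') ∈ oc) : WfEnds oc [ψ, ψ'] := by
  have hψ : ψ ∈ oc.image Prod.fst := Finset.mem_image_of_mem Prod.fst h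
  have hψ' : ψ' ∈ oc.image Prod.snd := Finset.mem_image_of_mem Prod.snd h
  exact ⟨by simpa using hdisj ψ hψ, by simpa using fun h' => hdisj ψ' h' hψ'⟩

lemma wfEnds_neutral {α : L} (hopen : ∀ β, (α, β) ∉ oc) (hclose : ∀ β, (β, α) ∉ oc) :
    WfEnds oc [α] := by
  constructor <;> simp [hopen, hclose]

variable [Fintype L]

lemma wfGrammar_output_of_mem_rules
    (hdisj : ∀ a : L, a ∈ oc.image Prod.fst → a ∉ oc.image Prod.snd)
    {r : ContextFreeRule L (wfGrammar L oc).NT} (hr : r ∈ (wfGrammar L oc).rules) :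
    r.output = [] ∨ ∃ a b : List L, WfEnds oc (a ++ b) ∧
      r.output = a.map Symbol.terminal ++
        Symbol.nonterminal (wfGrammar L oc).initial :: b.map Symbol.terminal := by
  -- `NT` is only definitionally `Unit`; retype so that the `Finset` membership lemmas apply.
  replace hr : (id r : ContextFreeRule L Unit) ∈
      (id (wfGrammar L oc).rules : Finset (ContextFreeRule L Unit)) := hr
  simp only [id_eq, wfGrammar, Finset.mem_union, Finset.mem_singleton, Finset.mem_image,
    Finset.mem_filter, Finset.mem_univ, true_and] at hr
  rcases hr with (rfl | ⟨α, ⟨hopen, hclose⟩, rfl⟩) | ⟨⟨ψ, ψ'⟩, hoc, rfl⟩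
  · exact Or.inl rfl
  · exact Or.inr ⟨[α], [], wfEnds_neutral hopen hclose, rfl⟩
  · exact Or.inr ⟨[ψ], [ψ'], wfEnds_pair hdisj hoc, rfl⟩

def WfSentential (oc : Finset (L × L)) (u : List (Symbol L (wfGrammar L oc).NT)) : Prop :=
  (∃ w, WfEnds oc w ∧ u = w.map Symbol.terminal) ∨
    ∃ x y, WfEnds oc (x ++ y) ∧ u =
      x.map Symbol.terminal ++ Symbol.nonterminal (wfGrammar L oc).initial :: y.map Symbol.terminal

lemma WfSentential.produces (hdisj : ∀ a : L, a ∈ oc.image Prod.fst → a ∉ oc.image Prod.snd)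
    {u v : List (Symbol L (wfGrammar L oc).NT)} (hu : WfSentential oc u)
    (huv : (wfGrammar L oc).Produces u v) : WfSentential oc v := by
  obtain ⟨r, hr, hrw⟩ := huv
  obtain ⟨p, q, rfl, rfl⟩ := hrw.exists_parts
  rw [List.append_assoc, List.singleton_append] at hu
  rcases hu with ⟨w, -, hw⟩ | ⟨x, y, hxy, hu⟩
  · have hmem : Symbol.nonterminal r.input ∈ w.map Symbol.terminal := by simp [← hw]
    simp at hmem
  obtain ⟨rfl, rfl⟩ := map_terminal_append_cons_inj hu.symm
  rcases wfGrammar_output_of_mem_rules hdisj hr with hout | ⟨a, b, hab, hout⟩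
  · exact Or.inl ⟨x ++ y, hxy, by simp [hout]⟩
  · refine Or.inr ⟨x ++ a, b ++ y, ?_, by simp [hout]⟩
    simpa only [List.append_assoc] using hxy.append_middle hab

lemma wfSentential_of_derives
    (hdisj : ∀ a : L, a ∈ oc.image Prod.fst → a ∉ oc.image Prod.snd)
    {u : List (Symbol L (wfGrammar L oc).NT)}
    (hu : (wfGrammar L oc).Derives [Symbol.nonterminal (wfGrammar L oc).initial] u) :
    WfSentential oc u := by
  induction hu with
  | refl => exact Or.inr ⟨[], [], ⟨by simp, by simp⟩, rfl⟩
  | tail _ hstep ih => exact ih.produces hdisj hstep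

lemma wfEnds_of_mem_language
    (hdisj : ∀ a : L, a ∈ oc.image Prod.fst → a ∉ oc.image Prod.snd)
    {w : List L} (hw : w ∈ (wfGrammar L oc).language) : WfEnds oc w := by
  rw [ContextFreeGrammar.mem_language_iff] at hw
  rcases wfSentential_of_derives hdisj hw with ⟨w', hw', hmap⟩ | ⟨x, y, -, hmap⟩
  · rwa [List.map_injective_iff.mpr (fun _ _ h => Symbol.terminal.inj h) hmap]
  · have hmem : Symbol.nonterminal (wfGrammar L oc).initial ∈ w.map Symbol.terminal := by
      simp [hmap]
    simp at hmem

end WellFormed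

/-- If no label is both an opener and a closer, then no nonempty word generated by `G_oc`
begins with a closer, and no nonempty word generated by `G_oc` ends with an opener. -/
theorem stmt_6 {L : Type} [Fintype L] [DecidableEq L] (oc : Finset (L × L))
    (hdisj : ∀ a : L, a ∈ oc.image Prod.fst → a ∉ oc.image Prod.snd)
    (w : List L) (hw : w ∈ (wfGrammar L oc).language) :
    (∀ (a : L) (v : List L), w = a :: v → a ∉ oc.image Prod.snd) ∧
    (∀ (v : List L) (a : L), w = v ++ [a] → a ∉ oc.image Prod.fst) := by
  obtain ⟨hhead, hlast⟩ := wfEnds_of_mem_language hdisj hw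
  exact ⟨fun a v h => hhead a (by simp [h]), fun v a h => hlast a (by simp [h])⟩
end

section
/- Let L be a finite label set and oc ⊆ L × L, and let G_oc be the well-formed-string grammar over (L, oc). Assume that the sets of openers and closers are disjoint. Then every nonempty word w generated by G_oc satisfies exactly one of the following, and in each case the decomposition is unique: (i) the first letter of w is a neutral label α and w = α·v for a word v generated by G_oc; or (ii) the first letter of w is an opener ψ, the last letter of w is a closer ψ' with (ψ, ψ') ∈ oc, and w = ψ·v·ψ' for a word v generated by G_oc. -/
namespace ContextFreeRule

variable {T N : Type*} {r : ContextFreeRule T N}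

lemma Rewrites.eq_output_of_singleton {x : List (Symbol T N)}
    (h : r.Rewrites [.nonterminal r.input] x) : x = r.output := by
  cases h with
  | head => exact List.append_nil _
  | cons _ h => cases h

lemma Rewrites.exists_of_terminal_append {a : List T} {u x : List (Symbol T N)}
    (h : r.Rewrites (a.map .terminal ++ u) x) :
    ∃ u', r.Rewrites u u' ∧ x = a.map .terminal ++ u' := by
  induction a generalizing x with
  | nil => exact ⟨x, h, rfl⟩
  | cons t a ih =>
    cases h with
    | cons _ h =>
      obtain ⟨u', hu', rfl⟩ := ih h
      exact ⟨u', hu', rfl⟩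

lemma Rewrites.exists_of_append_terminal {b : List T} {u x : List (Symbol T N)}
    (h : r.Rewrites (u ++ b.map .terminal) x) :
    ∃ u', r.Rewrites u u' ∧ x = u' ++ b.map .terminal := by
  induction u generalizing x with
  | nil => simpa using h.nonterminal_input_mem
  | cons s u ih =>
    cases h with
    | head => exact ⟨r.output ++ u, .head u, by simp⟩
    | cons _ h =>
      obtain ⟨u', hu', rfl⟩ := ih h
      exact ⟨s :: u', hu'.cons s, rfl⟩

end ContextFreeRule

namespace ContextFreeGrammar

variable {T : Type*} {g : ContextFreeGrammar T}

lemma Derives.eq_nil_of_nil {u : List (Symbol T g.NT)} (h : g.Derives [] u) : u = [] := by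
  rcases h.eq_or_head with rfl | ⟨_, hp, -⟩
  · rfl
  · simpa using hp.exists_nonterminal_input_mem

lemma Produces.exists_of_terminal_context {a b : List T} {u x : List (Symbol T g.NT)}
    (h : g.Produces (a.map .terminal ++ u ++ b.map .terminal) x) :
    ∃ u', g.Produces u u' ∧ x = a.map .terminal ++ u' ++ b.map .terminal := by
  obtain ⟨r, hr, hrw⟩ := h
  rw [List.append_assoc] at hrw
  obtain ⟨y, hy, rfl⟩ := hrw.exists_of_terminal_append
  obtain ⟨u', hu', rfl⟩ := hy.exists_of_append_terminal
  exact ⟨u', ⟨r, hr, hu'⟩, by simp⟩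

lemma Derives.exists_of_terminal_context {a b w : List T} {u : List (Symbol T g.NT)}
    (h : g.Derives (a.map .terminal ++ u ++ b.map .terminal) (w.map .terminal)) :
    ∃ v, w = a ++ v ++ b ∧ g.Derives u (v.map .terminal) := by
  generalize hs : a.map .terminal ++ u ++ b.map .terminal = s at h
  induction h using Relation.ReflTransGen.head_induction_on generalizing u with
  | refl =>
    obtain ⟨l, b', rfl, hl, hb⟩ := List.map_eq_append_iff.mp hs.symm
    obtain ⟨a', v, rfl, ha, rfl⟩ := List.map_eq_append_iff.mp hl
    have hinj : Function.Injective (List.map (Symbol.terminal (T := T) (N := g.NT))) :=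
      List.map_injective_iff.mpr fun _ _ => Symbol.terminal.inj
    rw [hinj ha, hinj hb]
    exact ⟨v, rfl, .refl _⟩
  | head hp _ ih =>
    subst hs
    obtain ⟨u', hu, rfl⟩ := hp.exists_of_terminal_context
    obtain ⟨v, rfl, hv⟩ := ih rfl
    exact ⟨v, rfl, hu.trans_derives hv⟩

end ContextFreeGrammar

open ContextFreeGrammar

section WellFormed

variable {L : Type} [Fintype L] [DecidableEq L] {oc : Finset (L × L)}

lemma wfGrammar_rules_cases {r : ContextFreeRule L Unit} (hr : r ∈ (wfGrammar L oc).rules) :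
    r = ⟨(), []⟩ ∨
      (∃ α, ((∀ β, (α, β) ∉ oc) ∧ (∀ β, (β, α) ∉ oc)) ∧
        r = ⟨(), [.terminal α, .nonterminal ()]⟩) ∨
      ∃ p ∈ oc, r = ⟨(), [.terminal p.1, .nonterminal (), .terminal p.2]⟩ := by
  replace hr := Finset.mem_union.mp hr
  simp only [Finset.mem_union, Finset.mem_singleton, Finset.mem_image,
    Finset.mem_filter, Finset.mem_univ, true_and] at hr
  rcases hr with (rfl | ⟨α, hα, rfl⟩) | ⟨p, hp, rfl⟩
  · exact .inl rfl
  · exact .inr (.inl ⟨α, hα, rfl⟩)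
  · exact .inr (.inr ⟨p, hp, rfl⟩)

lemma wfGrammar_cases_of_ne_nil {w : List L} (hw : w ∈ (wfGrammar L oc).language)
    (hne : w ≠ []) :
    (∃ α v, ((∀ β, (α, β) ∉ oc) ∧ (∀ β, (β, α) ∉ oc)) ∧ w = α :: v ∧
        v ∈ (wfGrammar L oc).language) ∨
      ∃ ψ ψ' v, (ψ, ψ') ∈ oc ∧ w = ψ :: (v ++ [ψ']) ∧ v ∈ (wfGrammar L oc).language := by
  rw [mem_language_iff] at hw
  obtain ⟨x, ⟨r, hr, hrw⟩, hder⟩ := hw.eq_or_head.resolve_left fun h => by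
    cases w with
    | nil => exact hne rfl
    | cons => simp at h
  rw [hrw.eq_output_of_singleton] at hder
  rcases wfGrammar_rules_cases hr with rfl | ⟨α, hα, rfl⟩ | ⟨⟨ψ, ψ'⟩, hψ, rfl⟩
  · exact absurd (by simpa using hder.eq_nil_of_nil) hne
  · obtain ⟨v, rfl, hv⟩ := Derives.exists_of_terminal_context (g := wfGrammar L oc) (a := [α]) (b := []) (u := [.nonterminal ()]) hder
    exact .inl ⟨α, v, hα, by simp, hv⟩
  · obtain ⟨v, rfl, hv⟩ := Derives.exists_of_terminal_context (g := wfGrammar L oc) (a := [ψ]) (b := [ψ']) (u := [.nonterminal ()]) hder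
    exact .inr ⟨ψ, ψ', v, hψ, by simp, hv⟩

end WellFormed

theorem stmt_7_general {L : Type} [Fintype L] [DecidableEq L] (oc : Finset (L × L))
    (w : List L) (hw : w ∈ (wfGrammar L oc).language) (hne : w ≠ []) :
    ((∃ α v, ((∀ β, (α, β) ∉ oc) ∧ (∀ β, (β, α) ∉ oc)) ∧ w = α :: v ∧
        v ∈ (wfGrammar L oc).language) ∨
      (∃ ψ ψ' v, (ψ, ψ') ∈ oc ∧ w = ψ :: (v ++ [ψ']) ∧ v ∈ (wfGrammar L oc).language)) ∧
    ¬((∃ α v, ((∀ β, (α, β) ∉ oc) ∧ (∀ β, (β, α) ∉ oc)) ∧ w = α :: v ∧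
        v ∈ (wfGrammar L oc).language) ∧
      (∃ ψ ψ' v, (ψ, ψ') ∈ oc ∧ w = ψ :: (v ++ [ψ']) ∧ v ∈ (wfGrammar L oc).language)) ∧
    ((∃ α v, ((∀ β, (α, β) ∉ oc) ∧ (∀ β, (β, α) ∉ oc)) ∧ w = α :: v ∧
        v ∈ (wfGrammar L oc).language) →
      ∃! d : L × List L, ((∀ β, (d.1, β) ∉ oc) ∧ (∀ β, (β, d.1) ∉ oc)) ∧ w = d.1 :: d.2 ∧
        d.2 ∈ (wfGrammar L oc).language) ∧
    ((∃ ψ ψ' v, (ψ, ψ') ∈ oc ∧ w = ψ :: (v ++ [ψ']) ∧ v ∈ (wfGrammar L oc).language) →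
      ∃! d : L × List L × L, (d.1, d.2.2) ∈ oc ∧ w = d.1 :: (d.2.1 ++ [d.2.2]) ∧
        d.2.1 ∈ (wfGrammar L oc).language) := by
  refine ⟨wfGrammar_cases_of_ne_nil hw hne, ?_, ?_, ?_⟩
  · rintro ⟨⟨α, v, hα, rfl, -⟩, ψ, ψ', u, hψ, h, -⟩
    obtain ⟨rfl, -⟩ := List.cons.inj h
    exact hα.1 ψ' hψ
  · rintro ⟨α, v, hα, rfl, hv⟩
    refine ⟨(α, v), ⟨hα, rfl, hv⟩, ?_⟩
    rintro ⟨α', v'⟩ ⟨-, h, -⟩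
    obtain ⟨rfl, rfl⟩ := List.cons.inj h
    rfl
  · rintro ⟨ψ, ψ', v, hψ, rfl, hv⟩
    refine ⟨(ψ, v, ψ'), ⟨hψ, rfl, hv⟩, ?_⟩
    rintro ⟨ψ₂, v₂, ψ₂'⟩ ⟨-, h, -⟩
    obtain ⟨rfl, h⟩ := List.cons.inj h
    obtain ⟨rfl, h⟩ := List.append_inj' h rfl
    obtain ⟨rfl, -⟩ := List.cons.inj h
    rfl

/-- Unique top-level decomposition of nonempty well-formed strings (Claim A.1): if the openers
and closers are disjoint, every nonempty word generated by `G_oc` satisfies exactly one of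
(i) it starts with a neutral label followed by a generated word, or
(ii) it is an opening label, a generated word, and a matching closing label;
and in each case the decomposition is unique. -/
theorem stmt_7 {L : Type} [Fintype L] [DecidableEq L] (oc : Finset (L × L))
    (hdisj : Disjoint (oc.image Prod.fst) (oc.image Prod.snd))
    (w : List L) (hw : w ∈ (wfGrammar L oc).language) (hne : w ≠ []) :
    ((∃ α v, ((∀ β, (α, β) ∉ oc) ∧ (∀ β, (β, α) ∉ oc)) ∧ w = α :: v ∧
        v ∈ (wfGrammar L oc).language) ∨
      (∃ ψ ψ' v, (ψ, ψ') ∈ oc ∧ w = ψ :: (v ++ [ψ']) ∧ v ∈ (wfGrammar L oc).language)) ∧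
    ¬((∃ α v, ((∀ β, (α, β) ∉ oc) ∧ (∀ β, (β, α) ∉ oc)) ∧ w = α :: v ∧
        v ∈ (wfGrammar L oc).language) ∧
      (∃ ψ ψ' v, (ψ, ψ') ∈ oc ∧ w = ψ :: (v ++ [ψ']) ∧ v ∈ (wfGrammar L oc).language)) ∧
    ((∃ α v, ((∀ β, (α, β) ∉ oc) ∧ (∀ β, (β, α) ∉ oc)) ∧ w = α :: v ∧
        v ∈ (wfGrammar L oc).language) →
      ∃! d : L × List L, ((∀ β, (d.1, β) ∉ oc) ∧ (∀ β, (β, d.1) ∉ oc)) ∧ w = d.1 :: d.2 ∧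
        d.2 ∈ (wfGrammar L oc).language) ∧
    ((∃ ψ ψ' v, (ψ, ψ') ∈ oc ∧ w = ψ :: (v ++ [ψ']) ∧ v ∈ (wfGrammar L oc).language) →
      ∃! d : L × List L × L, (d.1, d.2.2) ∈ oc ∧ w = d.1 :: (d.2.1 ++ [d.2.2]) ∧
        d.2.1 ∈ (wfGrammar L oc).language) :=
  stmt_7_general oc w hw hne
end
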